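/- arXiv:2101.09561 — 2 statements merged into one kernel-verified Lean document; each statement's English description precedes it below -/
import Mathlib

section
/- Let R > 1 and let D = {z ∈ ℂ : 1 < |z| < R} be the round annulus. Define Δ1 = {r·exp(iθ) : 1 < r < R, 0 < θ < 4π/3}, Δ2 = {exp(2πi/3)·z : z ∈ Δ1} and Δ3 = {exp(4πi/3)·z : z ∈ Δ1}. Then each Δj (j = 1, 2, 3) is an open subset of D, and for every pair of points z1, z2 ∈ D there exists j ∈ {1, 2, 3} such that both z1 and z2 belong to the closure of Δj. -/
/-!
In logarithmic coordinates `z = exp (x + θ i)` the sector `Δ1` is the image of an open rectangle,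
and the rotations by `2π/3` and `4π/3` translate that rectangle vertically. Hence the closure of
each sector contains every point of the annulus whose argument lies, modulo `2π`, in the closed
arc `[c, c + 4π/3]`, `c ∈ {0, 2π/3, 4π/3}`. The three arcs miss the three pairwise disjoint open
thirds `(c + 4π/3, c + 2π)` of the circle, so two points can spoil at most two of the sectors.
-/

open Real Set Complex

def annulus (ρ R : ℝ) : Set ℂ := {z : ℂ | ρ < ‖z‖ ∧ ‖z‖ < R}

def annularSector (ρ R α β : ℝ) : Set ℂ :=
  cexp '' (Ioo (Real.log ρ) (Real.log R) ×ℂ Ioo α β)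

lemma setOf_polar_eq_annularSector {ρ R : ℝ} (hρ : 0 < ρ) (hR : 0 < R) (α β : ℝ) :
    {w : ℂ | ∃ r θ : ℝ, ρ < r ∧ r < R ∧ α < θ ∧ θ < β ∧ w = (r : ℂ) * cexp (θ * I)} =
      annularSector ρ R α β := by
  ext w
  simp only [annularSector, mem_ofPred_eq, mem_image, mem_reProdIm, mem_Ioo]
  constructor
  · rintro ⟨r, θ, hρr, hrR, hαθ, hθβ, rfl⟩
    have hr : 0 < r := hρ.trans hρr
    refine ⟨Real.log r + θ * I, ⟨?_, ?_⟩, ?_⟩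
    · simpa using ⟨Real.log_lt_log hρ hρr, Real.log_lt_log hr hrR⟩
    · simpa using ⟨hαθ, hθβ⟩
    · rw [Complex.exp_add, ← ofReal_exp, Real.exp_log hr]
  · rintro ⟨z, ⟨⟨hρz, hzR⟩, hαz, hzβ⟩, rfl⟩
    refine ⟨Real.exp z.re, z.im, ?_, ?_, hαz, hzβ, ?_⟩
    · rwa [← Real.log_lt_iff_lt_exp hρ]
    · rwa [← Real.lt_log_iff_exp_lt hR]
    · rw [ofReal_exp, ← Complex.exp_add, re_add_im]

lemma isOpen_annularSector (ρ R α β : ℝ) : IsOpen (annularSector ρ R α β) :=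
  isOpenMap_exp _ (isOpen_Ioo.reProdIm isOpen_Ioo)

lemma annularSector_subset_annulus {ρ R : ℝ} (hρ : 0 < ρ) (hR : 0 < R) (α β : ℝ) :
    annularSector ρ R α β ⊆ annulus ρ R := by
  rintro _ ⟨z, ⟨⟨hρz, hzR⟩, -⟩, rfl⟩
  rw [annulus, mem_ofPred_eq, norm_exp, ← Real.log_lt_iff_lt_exp hρ, ← Real.lt_log_iff_exp_lt hR]
  exact ⟨hρz, hzR⟩

lemma image_exp_mul_annularSector (ρ R α β c : ℝ) :
    (fun z => cexp (c * I) * z) '' annularSector ρ R α β =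
      annularSector ρ R (c + α) (c + β) := by
  have hrot : (fun z => cexp (c * I) * z) ∘ cexp = cexp ∘ (fun w => c * I + w) := by
    ext w; simp [Complex.exp_add]
  have htrans : (fun w => c * I + w) '' (Ioo (Real.log ρ) (Real.log R) ×ℂ Ioo α β) =
      Ioo (Real.log ρ) (Real.log R) ×ℂ Ioo (c + α) (c + β) := by
    ext w
    simp only [image_add_left, mem_preimage, mem_reProdIm, add_re, add_im, neg_re, neg_im,
      mul_re, mul_im, ofReal_re, ofReal_im, I_re, I_im, mem_Ioo]
    constructor <;> rintro ⟨h₁, h₂, h₃⟩ <;> refine ⟨by simpa using h₁, by linarith, by linarith⟩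
  rw [annularSector, image_image, ← Function.comp_def, hrot, image_comp, htrans, annularSector]

lemma exp_mem_closure_annularSector {ρ R α β x θ : ℝ} (hαβ : α < β)
    (hx : x ∈ Ioo (Real.log ρ) (Real.log R)) (hθ : θ ∈ Icc α β ∨ θ + 2 * π ∈ Icc α β) :
    cexp (x + θ * I) ∈ closure (annularSector ρ R α β) := by
  wlog hθ' : θ ∈ Icc α β generalizing θ
  · have h2π : cexp (x + θ * I) = cexp (x + ↑(θ + 2 * π) * I) := by
      rw [← exp_periodic (x + θ * I)]; push_cast; ring_nf
    exact h2π ▸ this (Or.inl (hθ.resolve_left hθ')) (hθ.resolve_left hθ')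
  refine image_closure_subset_closure_image Complex.continuous_exp ⟨x + θ * I, ?_, rfl⟩
  rw [closure_reProdIm, closure_Ioo hαβ.ne]
  exact mem_reProdIm.2 ⟨by simpa using subset_closure hx, by simpa using hθ'⟩

lemma exists_mem_Ico_eq_exp_log_norm_add_mul_I {z : ℂ} (hz : z ≠ 0) :
    ∃ θ ∈ Ico 0 (2 * π), z = cexp (Real.log ‖z‖ + θ * I) := by
  refine ⟨toIcoMod two_pi_pos 0 z.arg, by simpa using toIcoMod_mem_Ico two_pi_pos 0 z.arg, ?_⟩
  calc z = cexp (Real.log ‖z‖ + z.arg * I - toIcoDiv two_pi_pos 0 z.arg • (2 * π * I)) := by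
        rw [exp_periodic.sub_zsmul_eq, ← Complex.log, exp_log hz]
    _ = _ := by
        rw [toIcoMod, zsmul_eq_mul, zsmul_eq_mul]
        push_cast
        ring_nf

lemma exists_eq_exp_of_mem_annulus {ρ R : ℝ} (hρ : 0 < ρ) {z : ℂ}
    (hz : z ∈ annulus ρ R) :
    ∃ x ∈ Ioo (Real.log ρ) (Real.log R), ∃ θ ∈ Ico 0 (2 * π), z = cexp (x + θ * I) := by
  have hz₀ : 0 < ‖z‖ := hρ.trans hz.1
  exact ⟨Real.log ‖z‖, ⟨Real.log_lt_log hρ hz.1, Real.log_lt_log hz₀ hz.2⟩,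
    exists_mem_Ico_eq_exp_log_norm_add_mul_I (norm_pos_iff.1 hz₀)⟩

lemma exists_arc_containing_pair (θ₁ θ₂ : ℝ) (h₁ : θ₁ ∈ Icc 0 (2 * π)) (h₂ : θ₂ ∈ Icc 0 (2 * π)) :
    ∃ c ∈ ({0, 2 * π / 3, 4 * π / 3} : Set ℝ), ∀ θ ∈ ({θ₁, θ₂} : Set ℝ),
      θ ∈ Icc c (c + 4 * π / 3) ∨ θ + 2 * π ∈ Icc c (c + 4 * π / 3) := by
  have hπ := pi_pos
  by_cases hA : θ₁ ≤ 4 * π / 3 ∧ θ₂ ≤ 4 * π / 3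
  · refine ⟨0, by simp, ?_⟩
    rintro θ (rfl | rfl)
    exacts [Or.inl ⟨h₁.1, by linarith⟩, Or.inl ⟨h₂.1, by linarith⟩]
  by_cases hB : 2 * π / 3 ≤ θ₁ ∧ 2 * π / 3 ≤ θ₂
  · refine ⟨2 * π / 3, by simp, ?_⟩
    rintro θ (rfl | rfl)
    exacts [Or.inl ⟨hB.1, by linarith [h₁.2]⟩, Or.inl ⟨hB.2, by linarith [h₂.2]⟩]
  -- otherwise one angle is below `2π/3` and the other above `4π/3`
  refine ⟨4 * π / 3, by simp, ?_⟩
  have hout : ∀ θ ∈ ({θ₁, θ₂} : Set ℝ), θ ≤ 2 * π / 3 ∨ 4 * π / 3 ≤ θ := by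
    rintro θ (rfl | rfl) <;> by_contra! h <;> grind
  intro θ hθ
  have hθ' : θ ∈ Icc 0 (2 * π) := by rcases hθ with rfl | rfl <;> assumption
  rcases hout θ hθ with h | h
  · exact Or.inr ⟨by linarith [hθ'.1], by linarith⟩
  · exact Or.inl ⟨h, by linarith [hθ'.2]⟩

/-- Osgood's quasiconformal decomposition of the round annulus `1 < |z| < R`:
the three sectors of angular width `4π/3` obtained from one another by rotation
through `2π/3` are open subsets of the annulus, and any two points of the annulus
lie together in the closure of one of them. -/
theorem annulus_decomposition (R : ℝ) (hR : 1 < R)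
    (D : Set ℂ) (hD : D = {z : ℂ | 1 < ‖z‖ ∧ ‖z‖ < R})
    (Δ1 Δ2 Δ3 : Set ℂ)
    (hΔ1 : Δ1 = {w : ℂ | ∃ r θ : ℝ, 1 < r ∧ r < R ∧ 0 < θ ∧ θ < 4 * π / 3 ∧
      w = (r : ℂ) * Complex.exp (θ * Complex.I)})
    (hΔ2 : Δ2 = (fun z : ℂ => Complex.exp (2 * π * Complex.I / 3) * z) '' Δ1)
    (hΔ3 : Δ3 = (fun z : ℂ => Complex.exp (4 * π * Complex.I / 3) * z) '' Δ1) :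
    (IsOpen Δ1 ∧ Δ1 ⊆ D) ∧ (IsOpen Δ2 ∧ Δ2 ⊆ D) ∧ (IsOpen Δ3 ∧ Δ3 ⊆ D) ∧
      ∀ z1 ∈ D, ∀ z2 ∈ D, ∃ Δ ∈ ({Δ1, Δ2, Δ3} : Set (Set ℂ)),
        z1 ∈ closure Δ ∧ z2 ∈ closure Δ := by
  have hπ := pi_pos
  have hR₀ : 0 < R := one_pos.trans hR
  rw [setOf_polar_eq_annularSector one_pos hR₀] at hΔ1
  have hrot (c : ℝ) (a : ℂ) (ha : a = c * I) :
      (fun z => cexp a * z) '' Δ1 = annularSector 1 R c (c + 4 * π / 3) := by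
    rw [ha, hΔ1, image_exp_mul_annularSector, add_zero]
  rw [hrot (2 * π / 3) _ (by push_cast; ring)] at hΔ2
  rw [hrot (4 * π / 3) _ (by push_cast; ring)] at hΔ3
  rw [← zero_add (4 * π / 3)] at hΔ1
  subst hD hΔ1 hΔ2 hΔ3
  have hsector (c : ℝ) := And.intro (isOpen_annularSector 1 R c (c + 4 * π / 3))
    (annularSector_subset_annulus one_pos hR₀ c (c + 4 * π / 3))
  refine ⟨hsector _, hsector _, hsector _, ?_⟩
  rintro _ hz₁ _ hz₂
  obtain ⟨x₁, hx₁, θ₁, hθ₁, rfl⟩ := exists_eq_exp_of_mem_annulus one_pos hz₁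
  obtain ⟨x₂, hx₂, θ₂, hθ₂, rfl⟩ := exists_eq_exp_of_mem_annulus one_pos hz₂
  obtain ⟨c, hc, hθ⟩ := exists_arc_containing_pair θ₁ θ₂ (Ico_subset_Icc_self hθ₁) (Ico_subset_Icc_self hθ₂)
  have hc' : c < c + 4 * π / 3 := by linarith
  exact ⟨_, by rcases hc with rfl | rfl | rfl <;> simp,
    exp_mem_closure_annularSector hc' hx₁ (hθ θ₁ (by simp)),
    exp_mem_closure_annularSector hc' hx₂ (hθ θ₂ (by simp))⟩
end

section
/- Let U ⊆ ℂ be open and let f : ℂ → ℂ be holomorphic on U with f'(z) ≠ 0 for all z ∈ U. Define ρ : U → ℝ by ρ(z) = log(|f'(z)|²). Then for every z ∈ U, applying the Wirtinger derivative twice gives ∂(∂ρ)(z) − (1/2)·(∂ρ(z))² = f'''(z)/f'(z) − (3/2)·(f''(z)/f'(z))²; that is, the Hernández–Martín Schwarzian derivative of f reduces to the classical Schwarzian derivative of the holomorphic function f. -/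
open Complex

/-- The Wirtinger derivative `∂g(z) = (1/2)·(Dg(z)(1) − i·Dg(z)(i))`, where `Dg(z)` is the
real Fréchet derivative of `g` at `z`. -/
noncomputable def wirtinger (g : ℂ → ℂ) (z : ℂ) : ℂ :=
  (1 / 2) * (fderiv ℝ g z 1 - Complex.I * fderiv ℝ g z Complex.I)

/-!
Writing `log ‖g‖² = log (g · conj g)`, the chain and product rules for `∂`, together with
`∂h = h'` and `∂(conj h) = 0` for holomorphic `h`, give
`∂ log ‖g‖² = g' · conj g / ‖g‖² = g' / g`.
With `g = f'` this makes `∂ρ = f''/f'` near `z`, a holomorphic function, so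
`∂∂ρ = (f''/f')' = f'''/f' - (f''/f')²` and the identity is algebra.
-/

open ComplexConjugate

theorem fderiv_real_apply_eq_deriv_mul {F : ℂ → ℂ} {x : ℂ} (hF : DifferentiableAt ℂ F x)
    (v : ℂ) : fderiv ℝ F x v = deriv F x * v := by
  rw [hF.fderiv_restrictScalars ℝ, ContinuousLinearMap.coe_restrictScalars',
    hF.hasDerivAt.hasFDerivAt.fderiv]
  simp [mul_comm]

theorem wirtinger_eq_deriv {g : ℂ → ℂ} {z : ℂ} (hg : DifferentiableAt ℂ g z) :
    wirtinger g z = deriv g z := by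
  simp only [wirtinger, fderiv_real_apply_eq_deriv_mul hg]
  linear_combination (-deriv g z / 2) * I_mul_I

theorem wirtinger_conj_eq_zero {g : ℂ → ℂ} {z : ℂ} (hg : DifferentiableAt ℂ g z) :
    wirtinger (fun w => conj (g w)) z = 0 := by
  have hD := conjCLE.comp_fderiv (f := g) (x := z)
  simp only [Function.comp_def, conjCLE_apply] at hD
  simp only [wirtinger, hD, ContinuousLinearMap.coe_comp, ContinuousLinearEquiv.coe_coe,
    Function.comp_apply, conjCLE_apply, fderiv_real_apply_eq_deriv_mul hg, map_mul, conj_I,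
    map_one]
  linear_combination (conj (deriv g z) / 2) * I_mul_I

theorem wirtinger_mul {p q : ℂ → ℂ} {z : ℂ} (hp : DifferentiableAt ℝ p z)
    (hq : DifferentiableAt ℝ q z) :
    wirtinger (fun w => p w * q w) z = wirtinger p z * q z + p z * wirtinger q z := by
  simp only [wirtinger, fderiv_fun_mul hp hq, add_apply, smul_apply, smul_eq_mul]
  ring

theorem Filter.EventuallyEq.wirtinger_eq {g h : ℂ → ℂ} {z : ℂ} (hgh : g =ᶠ[nhds z] h) :
    wirtinger g z = wirtinger h z := by
  rw [wirtinger, wirtinger, hgh.fderiv_eq]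

theorem wirtinger_comp {F p : ℂ → ℂ} {z : ℂ} (hp : DifferentiableAt ℝ p z)
    (hF : DifferentiableAt ℂ F (p z)) :
    wirtinger (F ∘ p) z = deriv F (p z) * wirtinger p z := by
  simp only [wirtinger, fderiv_comp z (hF.restrictScalars ℝ) hp, ContinuousLinearMap.coe_comp,
    Function.comp_apply, fderiv_real_apply_eq_deriv_mul hF]
  ring

theorem wirtinger_ofReal_log_norm_sq {g : ℂ → ℂ} {z : ℂ} (hg : DifferentiableAt ℂ g z)
    (hz : g z ≠ 0) :
    wirtinger (fun w => (Real.log (‖g w‖ ^ 2) : ℂ)) z = deriv g z / g z := by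
  have hlog : (fun w => (Real.log (‖g w‖ ^ 2) : ℂ)) = log ∘ fun w => g w * conj (g w) := by
    funext w
    rw [Function.comp_apply, mul_conj, normSq_eq_norm_sq, ofReal_log (by positivity)]
  have hslit : g z * conj (g z) ∈ slitPlane := by
    rw [mul_conj]
    exact ofReal_mem_slitPlane.2 (normSq_pos.2 hz)
  have hgR : DifferentiableAt ℝ g z := hg.restrictScalars ℝ
  have hconjR : DifferentiableAt ℝ (fun w => conj (g w)) z := hgR.star
  rw [hlog, wirtinger_comp (hgR.fun_mul hconjR) (differentiableAt_log hslit), deriv_log hslit,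
    wirtinger_mul hgR hconjR, wirtinger_eq_deriv hg, wirtinger_conj_eq_zero hg]
  have : conj (g z) ≠ 0 := (map_ne_zero _).2 hz
  field_simp
  ring

/-- For `f` holomorphic with nonvanishing derivative on an open set `U`, the
Hernández–Martín Schwarzian derivative `ρ_zz − (1/2)(ρ_z)²` of `f`, with
`ρ = log |f'|²`, reduces to the classical Schwarzian derivative
`f'''/f' − (3/2)(f''/f')²`. -/
theorem schwarzian_reduces_to_classical (U : Set ℂ) (hU : IsOpen U) (f : ℂ → ℂ)
    (hf : DifferentiableOn ℂ f U) (hf' : ∀ z ∈ U, deriv f z ≠ 0)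
    (ρ : ℂ → ℂ) (hρ : ∀ z ∈ U, ρ z = (Real.log (‖deriv f z‖ ^ 2) : ℂ)) :
    ∀ z ∈ U, wirtinger (wirtinger ρ) z - (1 / 2) * (wirtinger ρ z) ^ 2 =
      deriv (deriv (deriv f)) z / deriv f z -
        (3 / 2) * (deriv (deriv f) z / deriv f z) ^ 2 := by
  intro z hz
  have hf₁ : DifferentiableOn ℂ (deriv f) U := hf.deriv hU
  have hf₂ : DifferentiableOn ℂ (deriv (deriv f)) U := hf₁.deriv hU
  have hρ_wirtinger : ∀ w ∈ U, wirtinger ρ w = deriv (deriv f) w / deriv f w := fun w hw => by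
    rw [Filter.eventuallyEq_of_mem (hU.mem_nhds hw) hρ |>.wirtinger_eq,
      wirtinger_ofReal_log_norm_sq (hf₁.differentiableAt (hU.mem_nhds hw)) (hf' w hw)]
  have hf₁z := hf₁.differentiableAt (hU.mem_nhds hz)
  have hf₂z := hf₂.differentiableAt (hU.mem_nhds hz)
  rw [Filter.eventuallyEq_of_mem (hU.mem_nhds hz) hρ_wirtinger |>.wirtinger_eq,
    wirtinger_eq_deriv (hf₂z.fun_div hf₁z (hf' z hz)), deriv_fun_div hf₂z hf₁z (hf' z hz),
    hρ_wirtinger z hz]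
  field_simp
  ring
end
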